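/- Suppose φ is an entire function of exponential type 1 with sup_{ℝ}|φ| ≤ C₀, all zeros real, and there exist a sequence x_j → +∞ with m(x_j,1)/ln x_j → ∞, where m(x,1) counts zeros in the closed unit disc around x. Then φ is not slowly decreasing: for every a > 0 there exists x ∈ ℝ such that |φ(x')| < (a + |x'|)^{-a} for all x' with |x - x'| ≤ a ln(a + |x|). -/

import Mathlib

open Complex Classical Filter

/-- The multiplicity of `z` as a zero of `φ`. -/
noncomputable def ordAt (φ : ℂ → ℂ) (z : ℂ) : ℕ :=
  if h : AnalyticAt ℂ φ z then (analyticOrderAt φ z).toNat else 0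

/-- Number of zeros of `φ`, counted with multiplicity, in the closed disc of radius `t`
centered at the real point `x`. -/
noncomputable def mcount (φ : ℂ → ℂ) (x t : ℝ) : ℝ :=
  ∑' z : {w : ℂ | φ w = 0 ∧ ‖(w - (x : ℂ))‖ ≤ t}, (ordAt φ z : ℝ)

/-- `f` has exponential type at most `τ`. -/
def ExpTypeLE (f : ℂ → ℂ) (τ : ℝ) : Prop :=
  ∀ ε > (0 : ℝ), ∃ C : ℝ, ∀ z : ℂ, ‖f z‖ ≤ C * Real.exp ((τ + ε) * ‖z‖)

lemma dslope_differentiable (f : ℂ → ℂ) (hf : Differentiable ℂ f) (t : ℂ) :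
    Differentiable ℂ (dslope f t) := by
  intro z
  rcases eq_or_ne z t with rfl | hz
  · rcases (hf.analyticAt z) with ⟨p, hp⟩
    exact (hp.has_fpower_series_dslope_fslope).analyticAt.differentiableAt
  · exact (differentiableAt_dslope_of_ne hz).mpr (hf z)

lemma dslope_factor (f : ℂ → ℂ) (t : ℂ) (h0 : f t = 0) (z : ℂ) :
    f z = (z - t) * dslope f t z := by
  have := sub_smul_dslope f t z
  rw [h0, sub_zero] at this
  rw [← this]; simp [smul_eq_mul]

lemma ordAt_eq (f : ℂ → ℂ) (z : ℂ) (h : AnalyticAt ℂ f z) : ordAt f z = (analyticOrderAt f z).toNat :=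
  dif_pos h

lemma order_ne_top (f : ℂ → ℂ) (hf : Differentiable ℂ f) (hne : ∃ w, f w ≠ 0) (z : ℂ) :
    analyticOrderAt f z ≠ ⊤ := by
  intro h
  rw [analyticOrderAt_eq_top] at h
  obtain ⟨w, hw⟩ := hne
  have : Set.EqOn f 0 Set.univ := by
    refine AnalyticOnNhd.eqOn_zero_of_preconnected_of_frequently_eq_zero
      (fun u _ => hf.analyticAt u) isPreconnected_univ (Set.mem_univ z) ?_
    exact ((h.filter_mono nhdsWithin_le_nhds).frequently)
  exact hw (this (Set.mem_univ w))

lemma order_eq_ordAt (f : ℂ → ℂ) (hf : Differentiable ℂ f) (hne : ∃ w, f w ≠ 0) (z : ℂ) :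
    analyticOrderAt f z = (ordAt f z : ℕ∞) := by
  rw [ordAt_eq f z (hf.analyticAt z)]
  exact (ENat.coe_toNat (order_ne_top f hf hne z)).symm

lemma ordAt_of_ne_zero (f : ℂ → ℂ) (hf : Differentiable ℂ f) (z : ℂ) (h : f z ≠ 0) :
    ordAt f z = 0 := by
  rw [ordAt_eq f z (hf.analyticAt z)]
  have : analyticOrderAt f z = (0 : ℕ) := by
    rw [AnalyticAt.analyticOrderAt_eq_natCast (hf.analyticAt z)]
    exact ⟨f, hf.analyticAt z, h, by simp⟩
  simp [this]

lemma dslope_ne_zero (f : ℂ → ℂ) (t : ℂ) (h0 : f t = 0) (hne : ∃ w, f w ≠ 0) :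
    ∃ w, dslope f t w ≠ 0 := by
  obtain ⟨w, hw⟩ := hne
  refine ⟨w, fun h => hw ?_⟩
  rw [dslope_factor f t h0 w, h, mul_zero]

lemma ordAt_dslope_ne (f : ℂ → ℂ) (hf : Differentiable ℂ f) (hne : ∃ w, f w ≠ 0)
    (t : ℂ) (h0 : f t = 0) (z : ℂ) (hz : z ≠ t) :
    ordAt f z = ordAt (dslope f t) z := by
  set g := dslope f t with hg
  have hgd : Differentiable ℂ g := dslope_differentiable f hf t
  have hgne : ∃ w, g w ≠ 0 := dslope_ne_zero f t h0 hne
  set n := ordAt g z with hn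
  have hord : analyticOrderAt g z = (n : ℕ∞) := order_eq_ordAt g hgd hgne z
  rw [AnalyticAt.analyticOrderAt_eq_natCast (hgd.analyticAt z)] at hord
  obtain ⟨h, h_an, h_ne, h_eq⟩ := hord
  have : analyticOrderAt f z = (n : ℕ∞) := by
    rw [AnalyticAt.analyticOrderAt_eq_natCast (hf.analyticAt z)]
    refine ⟨fun w => (w - t) * h w, ((analyticAt_id.sub analyticAt_const).mul h_an), ?_, ?_⟩
    · simp only [mul_ne_zero_iff]
      exact ⟨sub_ne_zero.mpr hz, h_ne⟩
    · filter_upwards [h_eq] with w hw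
      rw [dslope_factor f t h0 w, ← hg, hw]
      simp [smul_eq_mul]; ring
  have := order_eq_ordAt f hf hne z ▸ this
  exact_mod_cast this

lemma ordAt_dslope_self (f : ℂ → ℂ) (hf : Differentiable ℂ f) (hne : ∃ w, f w ≠ 0)
    (t : ℂ) (h0 : f t = 0) :
    ordAt f t = ordAt (dslope f t) t + 1 := by
  set g := dslope f t with hg
  have hgd : Differentiable ℂ g := dslope_differentiable f hf t
  have hgne : ∃ w, g w ≠ 0 := dslope_ne_zero f t h0 hne
  set n := ordAt g t with hn
  have hord : analyticOrderAt g t = (n : ℕ∞) := order_eq_ordAt g hgd hgne t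
  rw [AnalyticAt.analyticOrderAt_eq_natCast (hgd.analyticAt t)] at hord
  obtain ⟨h, h_an, h_ne, h_eq⟩ := hord
  have : analyticOrderAt f t = ((n + 1 : ℕ) : ℕ∞) := by
    rw [AnalyticAt.analyticOrderAt_eq_natCast (hf.analyticAt t)]
    refine ⟨h, h_an, h_ne, ?_⟩
    filter_upwards [h_eq] with w hw
    rw [dslope_factor f t h0 w, ← hg, hw]
    simp [smul_eq_mul]; ring
  have := order_eq_ordAt f hf hne t ▸ this
  exact_mod_cast this

lemma factor_lemma (x r : ℝ) : ∀ (N : ℕ) (f : ℂ → ℂ), Differentiable ℂ f → (∃ w, f w ≠ 0) →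
    ∀ T : Finset ℂ, (∀ z ∈ T, f z = 0 ∧ ‖(z - (x : ℂ))‖ ≤ r) →
    (N ≤ ∑ z ∈ T, ordAt f z) →
    ∃ (L : List ℂ) (g : ℂ → ℂ), L.length = N ∧ (∀ t ∈ L, ‖(t - (x : ℂ))‖ ≤ r) ∧
      Differentiable ℂ g ∧ ∀ z, f z = (L.map (fun t => z - t)).prod * g z := by
  intro N
  induction N with
  | zero =>
    intro f hf hne T hT hsum
    exact ⟨[], f, rfl, by simp, hf, fun z => by simp⟩
  | succ N ih =>
    intro f hf hne T hT hsum
    have hpos : 0 < ∑ z ∈ T, ordAt f z := lt_of_lt_of_le (Nat.succ_pos N) hsum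
    obtain ⟨t, htT, hto⟩ : ∃ t ∈ T, ordAt f t ≠ 0 := by
      by_contra hcon
      push_neg at hcon
      rw [Finset.sum_eq_zero hcon] at hpos
      exact lt_irrefl 0 hpos
    obtain ⟨h0, hdist⟩ := hT t htT
    set g := dslope f t with hg
    have hgd : Differentiable ℂ g := dslope_differentiable f hf t
    have hgne : ∃ w, g w ≠ 0 := dslope_ne_zero f t h0 hne
    -- sum estimate
    have hsum_g : N ≤ ∑ z ∈ T, ordAt g z := by
      have key : ∑ z ∈ T, ordAt f z = (∑ z ∈ T, ordAt g z) + 1 := by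
        rw [← Finset.add_sum_erase T _ htT, ← Finset.add_sum_erase T (fun z => ordAt g z) htT]
        have h1 : ordAt f t = ordAt g t + 1 := ordAt_dslope_self f hf hne t h0
        have h2 : ∑ z ∈ T.erase t, ordAt f z = ∑ z ∈ T.erase t, ordAt g z := by
          refine Finset.sum_congr rfl fun z hz => ?_
          exact ordAt_dslope_ne f hf hne t h0 z (Finset.ne_of_mem_erase hz)
        rw [h1, h2]; ring
      omega
    -- new finset
    set T' := T.filter (fun z => g z = 0) with hT'
    have hsum' : N ≤ ∑ z ∈ T', ordAt g z := by
      refine le_trans hsum_g (le_of_eq ?_)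
      rw [hT']
      exact (Finset.sum_filter_of_ne (fun z hz hord =>
        by_contra fun hgz => hord (ordAt_of_ne_zero g hgd z hgz))).symm
    have hT'cond : ∀ z ∈ T', g z = 0 ∧ ‖(z - (x : ℂ))‖ ≤ r := by
      intro z hz
      rw [hT', Finset.mem_filter] at hz
      exact ⟨hz.2, (hT z hz.1).2⟩
    obtain ⟨L, ψ, hlen, hLdist, hψd, hψeq⟩ := ih g hgd hgne T' hT'cond hsum'
    refine ⟨t :: L, ψ, by simp [hlen], ?_, hψd, ?_⟩
    · intro s hs
      rcases List.mem_cons.mp hs with rfl | hs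
      · exact hdist
      · exact hLdist s hs
    · intro z
      rw [dslope_factor f t h0 z, ← hg, hψeq z]
      simp [List.map_cons, List.prod_cons]; ring

lemma mcount_extract (f : ℂ → ℂ) (x r M : ℝ) (hM : 0 ≤ M) (h : M + 1 ≤ mcount f x r) :
    ∃ T : Finset ℂ, (∀ z ∈ T, f z = 0 ∧ ‖(z - (x : ℂ))‖ ≤ r) ∧
      M ≤ ((∑ z ∈ T, ordAt f z : ℕ) : ℝ) := by
  set S := {w : ℂ | f w = 0 ∧ ‖(w - (x : ℂ))‖ ≤ r}
  by_cases hs : Summable (fun z : S => (ordAt f z : ℝ))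
  · have hHS : HasSum (fun z : S => (ordAt f z : ℝ)) (mcount f x r) := hs.hasSum
    have hev : ∀ᶠ s : Finset S in Filter.atTop,
        mcount f x r - 1 < ∑ i ∈ s, (ordAt f i.val : ℝ) :=
      hHS.eventually (eventually_gt_nhds (by linarith [h]))
    obtain ⟨s, hsge⟩ := hev.exists
    refine ⟨s.image Subtype.val, ?_, ?_⟩
    · intro z hz
      obtain ⟨i, _, rfl⟩ := Finset.mem_image.mp hz
      exact i.property
    · have : ∑ z ∈ s.image Subtype.val, ordAt f z = ∑ i ∈ s, ordAt f i.val :=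
        Finset.sum_image (fun a _ b _ hab => Subtype.ext hab)
      rw [this]
      push_cast
      linarith
  · rw [mcount, tsum_eq_zero_of_not_summable hs] at h
    linarith

lemma half_plane_aux (φ : ℂ → ℂ) (C₀ C1 : ℝ) (hφ : Differentiable ℂ φ)
    (hb15 : ∀ z : ℂ, ‖φ z‖ ≤ C1 * Real.exp (3/2 * ‖z‖))
    (e : ℂ) (he : ‖e‖ = 1)
    (him : ∀ x : ℝ, ‖φ (e * (x * I))‖ ≤ C₀) :
    ∀ w : ℂ, 0 ≤ w.re → ‖φ (e * w)‖ ≤ C₀ * Real.exp (2 * w.re) := by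
  have hC1 : 0 ≤ C1 := by
    have := hb15 0
    have h2 := norm_nonneg (φ 0)
    nlinarith [Real.exp_pos (3/2 * ‖(0:ℂ)‖)]
  set F : ℂ → ℂ := fun w => φ (e * w) * Complex.exp (-2 * w) with hF
  have hFd : Differentiable ℂ F :=
    (hφ.comp ((differentiable_const e).mul differentiable_id)).mul
      (((differentiable_const (-2:ℂ)).mul differentiable_id).cexp)
  have hFnorm : ∀ w : ℂ, ‖F w‖ = ‖φ (e * w)‖ * Real.exp (-2 * w.re) := by
    intro w
    rw [hF]
    simp only [norm_mul, Complex.norm_exp]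
    congr 2
    simp
  have key : ∀ w : ℂ, 0 ≤ w.re → ‖F w‖ ≤ C₀ := by
    intro w hw
    refine PhragmenLindelof.right_half_plane_of_bounded_on_real
      hFd.diffContOnCl ?_ ?_ ?_ hw
    · refine ⟨1, by norm_num, 4, ?_⟩
      refine Asymptotics.IsBigO.of_bound C1 (Filter.Eventually.of_forall fun z => ?_)
      rw [hFnorm]
      have h1 : ‖φ (e * z)‖ ≤ C1 * Real.exp (3/2 * ‖z‖) := by
        have := hb15 (e * z)
        rwa [norm_mul, he, one_mul] at this
      have h2 : Real.exp (-2 * z.re) ≤ Real.exp (2 * ‖z‖) := by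
        apply Real.exp_le_exp.mpr
        have := Complex.abs_re_le_norm z
        have := abs_le.mp (le_of_eq rfl : |z.re| ≤ |z.re|)
        nlinarith [Complex.abs_re_le_norm z, neg_abs_le z.re, le_abs_self z.re]
      have h3 : Real.exp (3/2 * ‖z‖) * Real.exp (2 * ‖z‖)
          ≤ Real.exp (4 * ‖z‖) := by
        rw [← Real.exp_add]
        apply Real.exp_le_exp.mpr
        nlinarith [norm_nonneg z]
      calc ‖φ (e * z)‖ * Real.exp (-2 * z.re)
          ≤ (C1 * Real.exp (3/2 * ‖z‖)) * Real.exp (2 * ‖z‖) := by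
            apply mul_le_mul h1 h2 (Real.exp_pos _).le
            positivity
        _ = C1 * (Real.exp (3/2 * ‖z‖) * Real.exp (2 * ‖z‖)) := by ring
        _ ≤ C1 * Real.exp (4 * ‖z‖) := by
            apply mul_le_mul_of_nonneg_left h3 hC1
        _ ≤ C1 * ‖Real.exp (4 * ‖z‖ ^ (1:ℝ))‖ := by
            rw [Real.norm_eq_abs, abs_of_pos (Real.exp_pos _), Real.rpow_one]
    · refine ⟨C1, ?_⟩
      rw [Filter.eventually_map]
      filter_upwards [Filter.eventually_ge_atTop (0:ℝ)] with x hx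
      rw [hFnorm]
      have h1 : ‖φ (e * x)‖ ≤ C1 * Real.exp (3/2 * x) := by
        have := hb15 (e * x)
        rwa [norm_mul, he, one_mul, Complex.norm_real, Real.norm_eq_abs, _root_.abs_of_nonneg hx] at this
      have hre : (x : ℂ).re = x := rfl
      rw [hre]
      calc ‖φ (e * x)‖ * Real.exp (-2 * x)
          ≤ (C1 * Real.exp (3/2 * x)) * Real.exp (-2 * x) := by
            apply mul_le_mul_of_nonneg_right h1 (Real.exp_pos _).le
        _ = C1 * Real.exp (3/2 * x + -2 * x) := by rw [Real.exp_add]; ring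
        _ ≤ C1 * 1 := by
            apply mul_le_mul_of_nonneg_left _ hC1
            rw [Real.exp_le_one_iff]
            linarith
        _ = C1 := mul_one C1
    · intro x
      rw [hFnorm]
      have hre : ((x : ℂ) * I).re = 0 := by simp
      rw [hre]
      simpa using him x
  intro w hw
  have h := key w hw
  rw [hFnorm] at h
  have hexp : Real.exp (-2 * w.re) = (Real.exp (2 * w.re))⁻¹ := by
    rw [← Real.exp_neg]; ring_nf
  rw [hexp] at h
  have hpos := Real.exp_pos (2 * w.re)
  calc ‖φ (e * w)‖
      = ‖φ (e * w)‖ * (Real.exp (2 * w.re))⁻¹ * Real.exp (2 * w.re) := by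
        field_simp
    _ ≤ C₀ * Real.exp (2 * w.re) := mul_le_mul_of_nonneg_right h hpos.le


lemma PL_bound (φ : ℂ → ℂ) (C₀ : ℝ) (hφ : Differentiable ℂ φ) (htype : ExpTypeLE φ 1)
    (hbd : ∀ t : ℝ, ‖φ t‖ ≤ C₀) :
    ∀ z : ℂ, ‖φ z‖ ≤ C₀ * Real.exp (2 * |z.im|) := by
  obtain ⟨C, hC⟩ := htype (1/2) (by norm_num)
  have hb15 : ∀ z : ℂ, ‖φ z‖ ≤ C * Real.exp (3/2 * ‖z‖) := by
    intro z
    have h32 : (3/2:ℝ) = 1 + 1/2 := by norm_num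
    rw [h32]
    exact hC z
  have hup : ∀ z : ℂ, 0 ≤ z.im → ‖φ z‖ ≤ C₀ * Real.exp (2 * z.im) := by
    intro z hz
    have him : ∀ x : ℝ, ‖φ (I * (x * I))‖ ≤ C₀ := by
      intro x
      have : (I : ℂ) * (x * I) = ((-x : ℝ) : ℂ) := by push_cast; ring_nf; simp [Complex.I_sq]
      rw [this]
      exact hbd (-x)
    have := half_plane_aux φ C₀ C hφ hb15 I Complex.norm_I him (-I * z) (by simp [hz])
    have heq : I * (-I * z) = z := by ring_nf; simp [Complex.I_sq]
    rw [heq] at this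
    have hre : (-I * z).re = z.im := by simp
    rwa [hre] at this
  have hdn : ∀ z : ℂ, z.im ≤ 0 → ‖φ z‖ ≤ C₀ * Real.exp (-(2 * z.im)) := by
    intro z hz
    have him : ∀ x : ℝ, ‖φ (-I * (x * I))‖ ≤ C₀ := by
      intro x
      have : (-I : ℂ) * (x * I) = ((x : ℝ) : ℂ) := by push_cast; ring_nf; simp [Complex.I_sq]
      rw [this]
      exact hbd x
    have := half_plane_aux φ C₀ C hφ hb15 (-I) (by simp) him (I * z) (by simp [hz])
    have heq : -I * (I * z) = z := by ring_nf; simp [Complex.I_sq]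
    rw [heq] at this
    have hre : (I * z).re = -z.im := by simp
    rw [hre] at this
    convert this using 2
    ring
  intro z
  rcases le_total 0 z.im with hz | hz
  · rw [_root_.abs_of_nonneg hz]; exact hup z hz
  · rw [_root_.abs_of_nonpos hz]
    have := hdn z hz
    convert this using 2
    ring


lemma max_mod (g : ℂ → ℂ) (hg : Differentiable ℂ g) (c : ℂ) (r : ℝ) (hr : 0 < r) (C : ℝ)
    (hC : ∀ z : ℂ, ‖z - c‖ = r → ‖g z‖ ≤ C) :
    ∀ z : ℂ, ‖z - c‖ ≤ r → ‖g z‖ ≤ C := by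
  intro z hz
  have hcl : z ∈ closure (Metric.ball c r) := by
    rw [closure_ball c hr.ne']
    simpa [Metric.mem_closedBall, Complex.dist_eq] using hz
  refine Complex.norm_le_of_forall_mem_frontier_norm_le Metric.isBounded_ball
    hg.diffContOnCl ?_ hcl
  intro w hw
  rw [frontier_ball c hr.ne'] at hw
  simp only [Metric.mem_sphere, Complex.dist_eq] at hw
  exact hC w hw

lemma abs_list_prod (l : List ℂ) : ‖l.prod‖ = (l.map (fun z => ‖z‖)).prod := by
  induction l with
  | nil => simp
  | cons a t ih => simp [ih]

lemma list_prod_nonneg (l : List ℝ) (h : ∀ y ∈ l, 0 ≤ y) : 0 ≤ l.prod := by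
  induction l with
  | nil => simp
  | cons a t ih =>
    simp only [List.prod_cons]
    exact mul_nonneg (h a (by simp)) (ih fun y hy => h y (by simp [hy]))

lemma list_prod_lb (l : List ℝ) (c : ℝ) (hc : 0 ≤ c) (h : ∀ y ∈ l, c ≤ y) :
    c ^ l.length ≤ l.prod := by
  induction l with
  | nil => simp
  | cons a t ih =>
    simp only [List.prod_cons, List.length_cons, pow_succ]
    have h1 := h a (by simp)
    have h2 := ih fun y hy => h y (by simp [hy])
    have h3 : (0:ℝ) ≤ c ^ t.length := pow_nonneg hc _
    have h4 : 0 ≤ t.prod := le_trans h3 h2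
    nlinarith

lemma list_prod_ub (l : List ℝ) (d : ℝ) (hd : 0 ≤ d) (h : ∀ y ∈ l, 0 ≤ y ∧ y ≤ d) :
    l.prod ≤ d ^ l.length := by
  induction l with
  | nil => simp
  | cons a t ih =>
    simp only [List.prod_cons, List.length_cons, pow_succ]
    have h1 := h a (by simp)
    have h2 := ih fun y hy => h y (by simp [hy])
    have h4 : 0 ≤ t.prod := list_prod_nonneg t fun y hy => (h y (by simp [hy])).1
    have h5 : (0:ℝ) ≤ d ^ t.length := pow_nonneg hd _
    nlinarith

set_option maxHeartbeats 1000000 in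
theorem stmt6 (φ : ℂ → ℂ) (C₀ : ℝ) (hφ : Differentiable ℂ φ)
    (htype : ExpTypeLE φ 1)
    (hbd : ∀ t : ℝ, ‖φ t‖ ≤ C₀)
    (hreal : ∀ z : ℂ, φ z = 0 → z.im = 0)
    (xs : ℕ → ℝ) (hxs : Tendsto xs atTop atTop)
    (hratio : Tendsto (fun j => mcount φ (xs j) 1 / Real.log (xs j)) atTop atTop) :
    ∀ a > (0 : ℝ), ∃ x : ℝ, ∀ x' : ℝ, |x - x'| ≤ a * Real.log (a + |x|) →
      ‖(φ (x' : ℂ))‖ < (a + |x'|) ^ (-a : ℝ) := by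
  intro a ha
  by_cases hne : ∃ w, φ w ≠ 0
  swap
  · push_neg at hne
    refine ⟨0, fun x' _ => ?_⟩
    rw [hne x']
    simpa using Real.rpow_pos_of_pos (by positivity) (-a)
  have hC₀0 : 0 ≤ C₀ := le_trans (norm_nonneg _) (hbd 0)
  set Cb : ℝ := max C₀ 1 with hCb
  have hCb1 : 1 ≤ Cb := le_max_right _ _
  have hCb0 : 0 < Cb := lt_of_lt_of_le one_pos hCb1
  have hPL : ∀ z : ℂ, ‖φ z‖ ≤ Cb * Real.exp (2 * |z.im|) := fun z =>
    le_trans (PL_bound φ C₀ hφ htype hbd z)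
      (mul_le_mul_of_nonneg_right (le_max_left _ _) (Real.exp_pos _).le)
  have hlog2 : 0 < Real.log 2 := Real.log_pos (by norm_num)
  set B₀ : ℝ := Real.log Cb + 6 + a * Real.log (1+a) with hB₀
  have hlogCb : 0 ≤ Real.log Cb := Real.log_nonneg hCb1
  have hlog1a : 0 ≤ Real.log (1+a) := Real.log_nonneg (by linarith)
  have hB₀0 : 0 ≤ B₀ := by positivity
  set K : ℝ := 2 * (B₀ + 5*a + 1) / Real.log 2 with hK
  have hK0 : 0 ≤ K := by positivity
  have hev : ∀ᶠ j in atTop, (max (max 2 (a+2)) (Real.exp 1) ≤ xs j) ∧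
      (K + 1 ≤ mcount φ (xs j) 1 / Real.log (xs j)) :=
    (hxs.eventually (eventually_ge_atTop _)).and (hratio.eventually (eventually_ge_atTop _))
  obtain ⟨j, hj1, hj2⟩ := hev.exists
  set x := xs j with hxdef
  have hx2 : 2 ≤ x := le_trans (le_trans (le_max_left _ _) (le_max_left _ _)) hj1
  have hxa2 : a + 2 ≤ x := le_trans (le_trans (le_max_right _ _) (le_max_left _ _)) hj1
  have hxe : Real.exp 1 ≤ x := le_trans (le_max_right _ _) hj1
  have hx0 : 0 < x := by linarith
  have hlogx1 : 1 ≤ Real.log x := by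
    have := Real.log_le_log (Real.exp_pos 1) hxe
    rwa [Real.log_exp] at this
  have hlogx0 : 0 < Real.log x := by linarith
  set L := Real.log (a + x) with hLdef
  have hL1 : 1 ≤ L := by
    have := Real.log_le_log (Real.exp_pos 1) (by linarith : Real.exp 1 ≤ a + x)
    rwa [Real.log_exp] at this
  have hL2logx : L ≤ 2 * Real.log x := by
    have hax : a + x ≤ x^2 := by nlinarith
    have := Real.log_le_log (by linarith : (0:ℝ) < a + x) hax
    rwa [Real.log_pow, Nat.cast_ofNat] at this
  set R := a * L with hRdef
  have hR0 : 0 < R := mul_pos ha (by linarith)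
  have hmc : K * Real.log x + 1 ≤ mcount φ x 1 := by
    have h1 : (K + 1) * Real.log x ≤ mcount φ x 1 := (le_div_iff₀ hlogx0).mp hj2
    nlinarith
  obtain ⟨T, hTmem, hTsum⟩ := mcount_extract φ x 1 (K * Real.log x) (by positivity) hmc
  set N := ∑ z ∈ T, ordAt φ z with hNdef
  have hNge : K * Real.log x ≤ (N:ℝ) := hTsum
  obtain ⟨Lst, g, hlen, hLodist, hgd, hfac⟩ := factor_lemma x 1 N φ hφ hne T hTmem le_rfl
  set r := 2*R + 3 with hrdef
  have hr0 : 0 < r := by simp only [hrdef]; linarith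
  set Mg : ℝ := Cb * Real.exp (2*r) / (2*R+2)^N with hMgdef
  have hden0 : (0:ℝ) < (2*R+2)^N := pow_pos (by linarith) N
  have hcirc : ∀ z : ℂ, ‖(z - (x:ℂ))‖ = r → ‖g z‖ ≤ Mg := by
    intro z hz
    have hprod_lb : (2*R+2)^N ≤ ‖(Lst.map (fun t => z - t)).prod‖ := by
      rw [abs_list_prod, List.map_map]
      have hmem : ∀ y ∈ Lst.map ((fun z : ℂ => ‖z‖) ∘ fun t => z - t), 2*R+2 ≤ y := by
        intro y hy
        obtain ⟨t, ht, rfl⟩ := List.mem_map.mp hy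
        simp only [Function.comp_apply]
        have h1 : ‖(z - (x:ℂ))‖ ≤ ‖z - t‖ + ‖(t - (x:ℂ))‖ := by
          have : z - (x:ℂ) = (z - t) + (t - (x:ℂ)) := by ring
          rw [this]; exact norm_add_le _ _
        have h2 := hLodist t ht
        rw [hz] at h1
        simp only [hrdef] at h1
        linarith
      have := list_prod_lb _ (2*R+2) (by linarith) hmem
      rwa [List.length_map, hlen] at this
    have him : |z.im| ≤ r := by
      have h1 : z.im = (z - (x:ℂ)).im := by simp
      rw [h1]
      exact le_trans (Complex.abs_im_le_norm _) (le_of_eq hz)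
    have hφz : ‖φ z‖ ≤ Cb * Real.exp (2*r) :=
      le_trans (hPL z) (mul_le_mul_of_nonneg_left
        (Real.exp_le_exp.mpr (by linarith)) hCb0.le)
    have heq : ‖φ z‖ = ‖(Lst.map (fun t => z - t)).prod‖
        * ‖g z‖ := by rw [hfac z, norm_mul]
    have hP0 : (0:ℝ) < ‖(Lst.map (fun t => z - t)).prod‖ :=
      lt_of_lt_of_le hden0 hprod_lb
    rw [hMgdef]
    rw [div_eq_mul_inv]
    calc ‖g z‖
        = ‖φ z‖ / ‖(Lst.map (fun t => z - t)).prod‖ := by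
          rw [heq]; field_simp
      _ ≤ (Cb * Real.exp (2*r)) / ((2*R+2)^N) := by
          apply div_le_div₀ (by positivity) hφz hden0 hprod_lb
      _ = Cb * Real.exp (2*r) * ((2*R+2)^N)⁻¹ := by rw [div_eq_mul_inv]
  have hball := max_mod g hgd (x:ℂ) r hr0 Mg hcirc
  refine ⟨x, fun x' hx' => ?_⟩
  rw [abs_of_pos hx0] at hx'
  have hx'R : |x - x'| ≤ R := hx'
  have hx'x : ‖((x':ℂ) - (x:ℂ))‖ ≤ R := by
    rw [← Complex.ofReal_sub, Complex.norm_real, Real.norm_eq_abs, abs_sub_comm]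
    exact hx'R
  have hgx' := hball (x':ℂ) (le_trans hx'x (by linarith))
  have hPub : ‖((Lst.map (fun t => (x':ℂ) - t)).prod)‖ ≤ (R+1)^N := by
    rw [abs_list_prod, List.map_map]
    have hmem : ∀ y ∈ Lst.map ((fun z : ℂ => ‖z‖) ∘ fun t => (x':ℂ) - t), 0 ≤ y ∧ y ≤ R+1 := by
      intro y hy
      obtain ⟨t, ht, rfl⟩ := List.mem_map.mp hy
      simp only [Function.comp_apply]
      refine ⟨norm_nonneg _, ?_⟩
      have h1 : ‖((x':ℂ) - t)‖ ≤ ‖((x':ℂ) - (x:ℂ))‖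
          + ‖((x:ℂ) - t)‖ := by
        have : (x':ℂ) - t = ((x':ℂ) - (x:ℂ)) + ((x:ℂ) - t) := by ring
        rw [this]; exact norm_add_le _ _
      have h2 := hLodist t ht
      rw [← norm_neg ((x:ℂ) - t)] at h1
      simp only [neg_sub] at h1
      linarith
    have := list_prod_ub _ (R+1) (by linarith) hmem
    rwa [List.length_map, hlen] at this
  have hφx' : ‖(φ (x':ℂ))‖ ≤ Cb * Real.exp (2*r) / 2^N := by
    have heq : ‖(φ (x':ℂ))‖ = ‖((Lst.map (fun t => (x':ℂ) - t)).prod)‖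
        * ‖(g (x':ℂ))‖ := by rw [hfac (x':ℂ), norm_mul]
    have h2N : (0:ℝ) < 2^N := pow_pos two_pos N
    have hkey : (R+1)^N * Mg = Cb * Real.exp (2*r) / 2^N := by
      rw [hMgdef]
      have : (2*R+2:ℝ)^N = 2^N * (R+1)^N := by
        rw [← mul_pow]; ring_nf
      rw [this]
      have hRp : (0:ℝ) < (R+1)^N := pow_pos (by linarith) N
      field_simp
    calc ‖(φ (x':ℂ))‖
        = ‖((Lst.map (fun t => (x':ℂ) - t)).prod)‖ * ‖(g (x':ℂ))‖ := heq
      _ ≤ (R+1)^N * Mg := by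
          apply mul_le_mul hPub hgx' (norm_nonneg _) (by positivity)
      _ = Cb * Real.exp (2*r) / 2^N := hkey
  -- final numeric estimate
  have hQ0 : (0:ℝ) < Cb * Real.exp (2*r) / 2^N := by positivity
  have hax'0 : (0:ℝ) < a + |x'| := by positivity
  have hfin : Cb * Real.exp (2*r) / 2^N < (a + |x'|) ^ (-a : ℝ) := by
    rw [Real.rpow_def_of_pos hax'0, ← Real.exp_log hQ0]
    apply Real.exp_lt_exp.mpr
    have hlogQ : Real.log (Cb * Real.exp (2*r) / 2^N)
        = Real.log Cb + 2*r - N * Real.log 2 := by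
      rw [Real.log_div (by positivity) (by positivity), Real.log_mul (by positivity)
        (by positivity), Real.log_exp, Real.log_pow]
    rw [hlogQ]
    -- bound log (a + |x'|)
    have hx'le : |x'| ≤ x + R := by
      have : |x'| ≤ |x| + |x' - x| := by
        calc |x'| = |x + (x' - x)| := by ring_nf
          _ ≤ |x| + |x' - x| := abs_add_le _ _
      rw [abs_of_pos hx0, abs_sub_comm] at this
      linarith
    have hLle : L ≤ a + x := by
      have := Real.log_le_sub_one_of_pos (by linarith : (0:ℝ) < a + x)
      simp only [hLdef]
      linarith
    have hRle : R ≤ a * (a + x) := by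
      simp only [hRdef]
      nlinarith
    have hlog_ax' : Real.log (a + |x'|) ≤ Real.log (1+a) + L := by
      have h1 : a + |x'| ≤ (1+a) * (a+x) := by nlinarith
      have h2 := Real.log_le_log hax'0 h1
      rwa [Real.log_mul (by linarith) (by linarith)] at h2
    have hNlog2 : B₀ + 5*(a*L) < (N:ℝ) * Real.log 2 := by
      have h1 : K * Real.log x * Real.log 2 ≤ (N:ℝ) * Real.log 2 :=
        mul_le_mul_of_nonneg_right hNge hlog2.le
      have h2 : K * Real.log 2 = 2 * (B₀ + 5*a + 1) := by
        rw [hK, div_mul_cancel₀ _ hlog2.ne']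
      have h3 : K * Real.log x * Real.log 2 = (K * Real.log 2) * Real.log x := by ring
      rw [h3, h2] at h1
      nlinarith
    have h4r : 2*r = 4*R + 6 := by rw [hrdef]; ring
    rw [h4r]
    have haL : a * Real.log (a + |x'|) ≤ a * (Real.log (1+a) + L) :=
      mul_le_mul_of_nonneg_left hlog_ax' ha.le
    have hB₀eq : B₀ = Real.log Cb + 6 + a * Real.log (1+a) := hB₀
    have hReq : R = a * L := hRdef
    linarith [hNlog2, haL]
  exact lt_of_le_of_lt hφx' hfin
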